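/- arXiv:1204.3495 — 6 statements merged into one kernel-verified Lean document; each statement's English description precedes it below -/
import Mathlib

section
/- Conversely, if a complete profile P extends the aggregated A-profile m(β) of an action assignment β for A ⊆ 𝒜, then there exists a full action assignment α extending β whose aggregation m(α) equals P. -/
/-- Given a finset `S` and desired fiber sizes `d` summing to `S.card`,
there is a function whose fibers on `S` have exactly those sizes. -/
lemma exists_fiber_card {Agt : Type*} [DecidableEq Agt] :
    ∀ (n : ℕ) (d : Fin n → ℕ) (S : Finset Agt), S.card = ∑ j, d j →
    ∃ f : Agt → ℕ, (∀ i ∈ S, f i < n) ∧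
      ∀ j : Fin n, (S.filter (fun i => f i = (j : ℕ))).card = d j := by
  intro n
  induction n with
  | zero =>
    intro d S hS
    refine ⟨fun _ => 0, fun i hi => ?_, fun j => Fin.elim0 j⟩
    simp_all
  | succ n ih =>
    intro d S hS
    rw [Fin.sum_univ_succ] at hS
    obtain ⟨T, hTS, hT⟩ := Finset.exists_subset_card_eq
      (show d 0 ≤ S.card by omega)
    have hsd : (S \ T).card = ∑ j : Fin n, d j.succ := by
      rw [Finset.card_sdiff_of_subset hTS]; omega
    obtain ⟨f', hf'1, hf'2⟩ := ih (fun j => d j.succ) (S \ T) hsd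
    refine ⟨fun i => if i ∈ T then 0 else f' i + 1, ?_, ?_⟩
    · intro i hi
      by_cases h : i ∈ T
      · simp [h]
      · simp only [h, if_false]
        have := hf'1 i (Finset.mem_sdiff.2 ⟨hi, h⟩)
        omega
    · intro j
      refine Fin.cases ?_ ?_ j
      · have : S.filter (fun i => (if i ∈ T then 0 else f' i + 1) = ((0 : Fin (n+1)) : ℕ)) = T := by
          ext i
          simp only [Finset.mem_filter]
          constructor
          · rintro ⟨hiS, h⟩
            by_contra h'
            simp [h'] at h
          · intro hiT
            exact ⟨hTS hiT, by simp [hiT]⟩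
        rw [this, hT]
      · intro j'
        have : S.filter (fun i => (if i ∈ T then 0 else f' i + 1) = ((j'.succ : Fin (n+1)) : ℕ))
            = (S \ T).filter (fun i => f' i = (j' : ℕ)) := by
          ext i
          simp only [Finset.mem_filter, Finset.mem_sdiff, Fin.val_succ]
          constructor
          · rintro ⟨hiS, h⟩
            by_cases h' : i ∈ T
            · simp [h'] at h
            · simp [h'] at h
              exact ⟨⟨hiS, h'⟩, by omega⟩
          · rintro ⟨⟨hiS, h'⟩, h⟩
            exact ⟨hiS, by simp [h', h]⟩
        rw [this, hf'2 j']

/-- If a complete profile `P` extends the aggregated `A`-profile of an action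
assignment `β` for `A`, then some full action assignment `α` extending `β`
aggregates exactly to `P`. -/
theorem complete_extension_realized {Agt : Type*} [Fintype Agt] [DecidableEq Agt]
    {k : ℕ} (role : Agt → Fin k) (a : Fin k → ℕ) (ha : ∀ r, 1 ≤ a r)
    (A : Finset Agt) (β : Agt → ℕ) (hβ : ∀ i ∈ A, β i < a (role i))
    (P : (r : Fin k) → Fin (a r) → ℕ)
    (hP : ∀ r, ∑ j, P r j = (Finset.univ.filter (fun i => role i = r)).card)
    (hext : ∀ (r : Fin k) (j : Fin (a r)),
      (A.filter (fun i => role i = r ∧ β i = (j : ℕ))).card ≤ P r j) :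
    ∃ α : Agt → ℕ, (∀ i, α i < a (role i)) ∧ (∀ i ∈ A, α i = β i) ∧
      ∀ (r : Fin k) (j : Fin (a r)),
        (Finset.univ.filter (fun i => role i = r ∧ α i = (j : ℕ))).card = P r j := by
  classical
  -- counts from A
  set c : (r : Fin k) → Fin (a r) → ℕ :=
    fun r j => (A.filter (fun i => role i = r ∧ β i = (j : ℕ))).card with hc
  have hextc : ∀ (r : Fin k) (j : Fin (a r)), c r j ≤ P r j := hext
  set S : Fin k → Finset Agt :=
    fun r => (Finset.univ.filter (fun i => role i = r)) \ A with hSdef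
  -- sum of c over actions is card of A-part of role r
  have hsumc : ∀ r, ∑ j, c r j = (A.filter (fun i => role i = r)).card := by
    intro r
    have := Finset.card_eq_sum_card_fiberwise
      (f := fun i => (⟨β i % a r, Nat.mod_lt _ (ha r)⟩ : Fin (a r)))
      (s := A.filter (fun i => role i = r)) (t := Finset.univ)
      (fun i _ => Finset.mem_univ _)
    rw [this]
    apply Finset.sum_congr rfl
    intro j _
    apply congrArg Finset.card
    ext i
    simp only [Finset.mem_filter, Fin.ext_iff]
    constructor
    · rintro ⟨hiA, hr, hb⟩
      have hr' : role i = r := Fin.eq_of_val_eq hr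
      have hlt : β i < a r := hr' ▸ hβ i hiA
      refine ⟨⟨hiA, hr⟩, ?_⟩
      rw [← hb, Nat.mod_eq_of_lt hlt]
    · rintro ⟨⟨hiA, hr⟩, hb⟩
      have hr' : role i = r := Fin.eq_of_val_eq hr
      have hlt : β i < a r := hr' ▸ hβ i hiA
      rw [Nat.mod_eq_of_lt hlt] at hb
      exact ⟨hiA, hr, hb⟩
  -- cardinality of the remaining agents in each role
  have hScard : ∀ r, (S r).card = ∑ j, (P r j - c r j) := by
    intro r
    have h1 : (S r).card + ((Finset.univ.filter (fun i => role i = r)) ∩ A).card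
        = (Finset.univ.filter (fun i => role i = r)).card :=
      Finset.card_sdiff_add_card_inter _ _
    have h2 : (Finset.univ.filter (fun i => role i = r)) ∩ A
        = A.filter (fun i => role i = r) := by
      ext i; simp [Finset.mem_inter, and_comm]
    have h3 : ∑ j, (c r j + (P r j - c r j)) = ∑ j, P r j := by
      apply Finset.sum_congr rfl
      intro j _
      have := hextc r j
      omega
    rw [Finset.sum_add_distrib] at h3
    rw [h2] at h1
    have h4 := hP r
    have h5 := hsumc r
    omega
  have key : ∀ r, ∃ f : Agt → ℕ, (∀ i ∈ S r, f i < a r) ∧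
      ∀ j : Fin (a r), ((S r).filter (fun i => f i = (j : ℕ))).card = P r j - c r j :=
    fun r => exists_fiber_card (a r) (fun j => P r j - c r j) (S r) (hScard r)
  choose f hf1 hf2 using key
  refine ⟨fun i => if i ∈ A then β i else f (role i) i, ?_, ?_, ?_⟩
  · intro i
    by_cases h : i ∈ A
    · simpa [h] using hβ i h
    · simp only [h, if_false]
      exact hf1 (role i) i (by simp [hSdef, h])
  · intro i hi; simp [hi]
  · intro r j
    have hsplit : Finset.univ.filter
        (fun i => role i = r ∧ (if i ∈ A then β i else f (role i) i) = (j : ℕ))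
        = (A.filter (fun i => role i = r ∧ β i = (j : ℕ)))
          ∪ ((S r).filter (fun i => f r i = (j : ℕ))) := by
      ext i
      simp only [Finset.mem_filter, Finset.mem_union, Finset.mem_univ, true_and,
        hSdef, Finset.mem_sdiff]
      by_cases h : i ∈ A
      · simp [h]
      · simp only [h, if_false, not_false_iff, and_true, false_and, false_or]
        constructor <;> (rintro ⟨hr, hv⟩; subst hr; exact ⟨rfl, hv⟩)
    have hdisj : Disjoint (A.filter (fun i => role i = r ∧ β i = (j : ℕ)))
        ((S r).filter (fun i => f r i = (j : ℕ))) := by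
      apply Finset.disjoint_left.2
      intro i hi hi'
      simp only [Finset.mem_filter, hSdef, Finset.mem_sdiff] at hi hi'
      exact hi'.1.2 hi.1
    rw [hsplit, Finset.card_union_of_disjoint hdisj, hf2 r j]
    have h1 : c r j ≤ P r j := hextc r j
    have h2 : (A.filter (fun i => role i = r ∧ β i = (j : ℕ))).card = c r j := rfl
    omega
end

section
/- In a role-based concurrent game structure S with translation f(S) to an ordinary concurrent game structure, for every state q, every coalition A, and every CGS-strategy s_A at q, the set of successor states reachable under all complete extensions of the aggregated profile m(s_A)(q) in S equals the set of successor states reachable under all complete action tuples extending s_A(q) in f(S). Consequently force(S, A, q) = force(f(S), A, q). -/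
/-!
Both sides only see an action tuple through its aggregated profile, so the whole statement
reduces to one counting fact: any table of per-role action counts whose row sums are the role
sizes is the aggregated profile of some action tuple. For the successor sets this is applied to
the agents outside the coalition, with the residual counts `P r j - m(s)(r, j)`; for `force`, to
the coalition itself.
-/

open Finset

theorem Finset.exists_fiber_card_eq {α : Type*} [DecidableEq α] {m : ℕ} (T : Finset α)
    (c : Fin m → ℕ) (hc : ∑ j, c j = #T) :
    ∃ g : α → ℕ, (∀ i ∈ T, g i < m) ∧ ∀ j : Fin m, #{i ∈ T | g i = j} = c j := by
  induction m generalizing T with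
  | zero =>
    obtain rfl : T = ∅ := card_eq_zero.mp (by simpa using hc.symm)
    exact ⟨0, by simp, fun j => j.elim0⟩
  | succ m ih =>
    rw [Fin.sum_univ_castSucc] at hc
    obtain ⟨U, hUT, hU⟩ :=
      exists_subset_card_eq (s := T) (by omega : ∑ j : Fin m, c j.castSucc ≤ #T)
    obtain ⟨g, hgU, hgc⟩ := ih U (fun j => c j.castSucc) hU.symm
    -- `U` realises the first `m` counts; the rest of `T` takes the last value `m`
    refine ⟨U.piecewise g fun _ => m, fun i _ => ?_, Fin.lastCases ?_ fun j => ?_⟩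
    · by_cases hi : i ∈ U
      · simpa [hi] using (hgU i hi).le
      · simp [hi]
    · have hlast : {i ∈ T | U.piecewise g (fun _ => m) i = m} = T \ U := by
        ext i
        by_cases hi : i ∈ U
        · simp [hi, (hgU i hi).ne]
        · simp [hi]
      simp [hlast, card_sdiff_of_subset hUT, hU]
      omega
    · have hcast : {i ∈ T | U.piecewise g (fun _ => m) i = j.castSucc} = {i ∈ U | g i = j} := by
        ext i
        by_cases hi : i ∈ U
        · simp [hi, hUT hi]
        · simp [hi, j.isLt.ne']
      rw [hcast, hgc]

theorem Finset.card_filter_eq_add_card_filter_compl {α : Type*} [Fintype α] [DecidableEq α]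
    (C : Finset α) (p : α → Prop) [DecidablePred p] :
    #{i | p i} = #{i ∈ C | p i} + #{i ∈ Cᶜ | p i} := by
  rw [← card_union_of_disjoint
      (disjoint_compl_right.mono (filter_subset _ _) (filter_subset _ _)),
    ← filter_union, union_compl]

namespace RoleCGS

variable {Agt Q : Type*} {k : ℕ} (role : Agt → Fin k) (act : Fin k → ℕ)

/-- The aggregated profile `m(α)`, counted over the agents of `T` only. -/
def aggProfile (T : Finset Agt) (α : Agt → ℕ) (r : Fin k) (j : Fin (act r)) : ℕ :=
  #{i ∈ T | role i = r ∧ α i = j}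

section

variable [Fintype Agt]

/-- Successors in the role-based game under all complete profiles `P ≥ F`. -/
def profileSucc (δ : ((r : Fin k) → Fin (act r) → ℕ) → Q) (F : (r : Fin k) → Fin (act r) → ℕ) :
    Set Q :=
  {q' | ∃ P : (r : Fin k) → Fin (act r) → ℕ, (∀ r, ∑ j, P r j = #{i | role i = r}) ∧
    (∀ r j, F r j ≤ P r j) ∧ δ P = q'}

/-- Successors in the translated game `f(S)` under all complete action tuples extending `s` on `C`. -/
def tupleSucc (δ : ((r : Fin k) → Fin (act r) → ℕ) → Q) (C : Finset Agt) (s : Agt → ℕ) : Set Q :=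
  {q' | ∃ α : Agt → ℕ, (∀ i, α i < act (role i)) ∧ (∀ i ∈ C, α i = s i) ∧
    δ (aggProfile role act univ α) = q'}

end

variable {role act}

theorem aggProfile_congr {T : Finset Agt} {α β : Agt → ℕ} (h : ∀ i ∈ T, α i = β i) :
    aggProfile role act T α = aggProfile role act T β := by
  ext r j
  exact congrArg card (filter_congr fun i hi => by rw [h i hi])

theorem aggProfile_mono {T U : Finset Agt} (hTU : T ⊆ U) (α : Agt → ℕ) (r : Fin k)
    (j : Fin (act r)) : aggProfile role act T α r j ≤ aggProfile role act U α r j :=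
  card_le_card (filter_subset_filter _ hTU)

theorem sum_aggProfile {T : Finset Agt} {α : Agt → ℕ} (hα : ∀ i ∈ T, α i < act (role i))
    (r : Fin k) : ∑ j, aggProfile role act T α r j = #{i ∈ T | role i = r} := by
  rw [card_eq_sum_card_fiberwise (f := α) (t := range (act r)) fun i hi => ?_,
    ← Fin.sum_univ_eq_sum_range]
  · simp only [aggProfile, filter_filter]
  · obtain ⟨hiT, rfl⟩ := mem_filter.1 hi
    exact mem_range.2 (hα i hiT)

variable [DecidableEq Agt]

theorem exists_aggProfile_eq (T : Finset Agt) (c : (r : Fin k) → Fin (act r) → ℕ)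
    (hc : ∀ r, ∑ j, c r j = #{i ∈ T | role i = r}) :
    ∃ g : Agt → ℕ, (∀ i ∈ T, g i < act (role i)) ∧ aggProfile role act T g = c := by
  choose g hg hgc using fun r => exists_fiber_card_eq _ (c r) (hc r)
  refine ⟨fun i => g (role i) i, fun i hi => hg _ i (mem_filter.2 ⟨hi, rfl⟩), ?_⟩
  ext r j
  rw [← hgc r j, aggProfile, filter_filter]
  exact congrArg card (filter_congr fun i _ => by
    constructor <;> rintro ⟨rfl, h⟩ <;> exact ⟨rfl, h⟩)

variable [Fintype Agt]

theorem aggProfile_univ (C : Finset Agt) (α : Agt → ℕ) (r : Fin k) (j : Fin (act r)) :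
    aggProfile role act univ α r j =
      aggProfile role act C α r j + aggProfile role act Cᶜ α r j :=
  card_filter_eq_add_card_filter_compl C _

theorem profileSucc_aggProfile_eq_tupleSucc (δ : ((r : Fin k) → Fin (act r) → ℕ) → Q)
    {C : Finset Agt} {s : Agt → ℕ} (hs : ∀ i ∈ C, s i < act (role i)) :
    profileSucc role act δ (aggProfile role act C s) = tupleSucc role act δ C s := by
  ext q'
  constructor
  · rintro ⟨P, hP, hsP, rfl⟩
    obtain ⟨g, hg, hgP⟩ :=
      exists_aggProfile_eq Cᶜ (fun r j => P r j - aggProfile role act C s r j) fun r => by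
        rw [sum_tsub_distrib _ fun j _ => hsP r j, hP, sum_aggProfile hs,
          card_filter_eq_add_card_filter_compl C, Nat.add_sub_cancel_left]
    refine ⟨C.piecewise s g, fun i => ?_, fun i hi => C.piecewise_eq_of_mem _ _ hi,
      congrArg δ ?_⟩
    · by_cases hi : i ∈ C
      · simpa [hi] using hs i hi
      · simpa [hi] using hg i (mem_compl.2 hi)
    · ext r j
      rw [aggProfile_univ C, aggProfile_congr fun i hi => C.piecewise_eq_of_mem s g hi,
        aggProfile_congr fun i hi => C.piecewise_eq_of_notMem s g (mem_compl.1 hi), hgP]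
      exact Nat.add_sub_cancel' (hsP r j)
  · rintro ⟨α, hα, hαs, rfl⟩
    refine ⟨_, sum_aggProfile fun i _ => hα i, fun r j => ?_, rfl⟩
    rw [← aggProfile_congr hαs]
    exact aggProfile_mono (subset_univ C) α r j

theorem profileForce_eq_tupleForce (ha : ∀ r, 1 ≤ act r)
    (δ : ((r : Fin k) → Fin (act r) → ℕ) → Q) (C : Finset Agt) :
    {X | ∃ F : (r : Fin k) → Fin (act r) → ℕ, (∀ r, ∑ j, F r j = #{i ∈ C | role i = r}) ∧
        X = profileSucc role act δ F} =
      {X | ∃ s : Agt → ℕ, (∀ i, s i < act (role i)) ∧ X = tupleSucc role act δ C s} := by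
  ext X
  constructor
  · rintro ⟨F, hF, rfl⟩
    obtain ⟨g, hg, rfl⟩ := exists_aggProfile_eq C F hF
    refine ⟨C.piecewise g 0, fun i => ?_, ?_⟩
    · by_cases hi : i ∈ C
      · simpa [hi] using hg i hi
      · simpa [hi] using Nat.succ_le_iff.1 (ha (role i))
    · rw [← profileSucc_aggProfile_eq_tupleSucc δ fun i hi => ?_,
        aggProfile_congr fun i hi => C.piecewise_eq_of_mem g 0 hi]
      simpa [hi] using hg i hi
  · rintro ⟨s, hs, rfl⟩
    exact ⟨_, sum_aggProfile fun i _ => hs i,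
      (profileSucc_aggProfile_eq_tupleSucc δ fun i _ => hs i).symm⟩

end RoleCGS

open RoleCGS in
/-- At a state with agents partitioned into roles, for any coalition `C` and
any CGS-strategy choice `s` at that state, the successors reachable in the
RCGS under complete profiles extending the aggregated profile of `s` coincide
with the successors reachable in the translated CGS under complete action
tuples extending `s`; consequently the families of enforceable successor sets
(`force`) coincide. -/
theorem succ_and_force_eq {Agt Q : Type*} [Fintype Agt] [DecidableEq Agt]
    {k : ℕ} (role : Agt → Fin k) (act : Fin k → ℕ) (ha : ∀ r, 1 ≤ act r)
    (δ : ((r : Fin k) → Fin (act r) → ℕ) → Q) (C : Finset Agt) :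
    (∀ s : Agt → ℕ, (∀ i, s i < act (role i)) →
      {q' : Q | ∃ P : (r : Fin k) → Fin (act r) → ℕ,
        (∀ r, ∑ j, P r j = (Finset.univ.filter (fun i => role i = r)).card) ∧
        (∀ (r : Fin k) (j : Fin (act r)),
          (C.filter (fun i => role i = r ∧ s i = (j : ℕ))).card ≤ P r j) ∧
        δ P = q'} =
      {q' : Q | ∃ α : Agt → ℕ, (∀ i, α i < act (role i)) ∧ (∀ i ∈ C, α i = s i) ∧
        δ (fun r j => (Finset.univ.filter (fun i => role i = r ∧ α i = (j : ℕ))).card)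
          = q'}) ∧
    -- force(S, C) = force(f(S), C):
    ({X : Set Q | ∃ F : (r : Fin k) → Fin (act r) → ℕ,
        (∀ r, ∑ j, F r j = (C.filter (fun i => role i = r)).card) ∧
        X = {q' : Q | ∃ P : (r : Fin k) → Fin (act r) → ℕ,
          (∀ r, ∑ j, P r j = (Finset.univ.filter (fun i => role i = r)).card) ∧
          (∀ r j, F r j ≤ P r j) ∧ δ P = q'}} =
      {X : Set Q | ∃ s : Agt → ℕ, (∀ i, s i < act (role i)) ∧
        X = {q' : Q | ∃ α : Agt → ℕ, (∀ i, α i < act (role i)) ∧ (∀ i ∈ C, α i = s i) ∧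
          δ (fun r j => (Finset.univ.filter (fun i => role i = r ∧ α i = (j : ℕ))).card)
            = q'}}) :=
  ⟨fun _ hs => profileSucc_aggProfile_eq_tupleSucc δ fun i _ => hs i,
    profileForce_eq_tupleForce ha δ C⟩
end

section
/- For any role-based concurrent game structure S, any ATL formula φ, and any state q, S, q ⊨ φ (under the role-based semantics) if and only if f(S), q ⊨ φ (under the standard CGS semantics of ATL). -/
/-- A concurrent game structure. -/
structure CGS (Agt Q Prp : Type*) where
  /-- number of actions available to agent `a` at state `q` -/
  d : Agt → Q → ℕ
  d_pos : ∀ a q, 1 ≤ d a q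
  /-- valuation -/
  label : Q → Set Prp
  /-- transition function on complete action tuples -/
  tr : (q : Q) → ((a : Agt) → Fin (d a q)) → Q

/-- ATL formulas with coalitions from a finite agent set. -/
inductive ATL (Prp Agt : Type*) : Type _
  | atom : Prp → ATL Prp Agt
  | neg : ATL Prp Agt → ATL Prp Agt
  | conj : ATL Prp Agt → ATL Prp Agt → ATL Prp Agt
  | next : Finset Agt → ATL Prp Agt → ATL Prp Agt
  | box : Finset Agt → ATL Prp Agt → ATL Prp Agt
  | untl : Finset Agt → ATL Prp Agt → ATL Prp Agt → ATL Prp Agt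

variable {Agt Q Prp : Type*}

/-- Outcome computations of a memoryless coalition strategy in a CGS. -/
def CGS.out (M : CGS Agt Q Prp) (A : Finset Agt)
    (s : (a : Agt) → (q : Q) → Fin (M.d a q)) (q : Q) : Set (ℕ → Q) :=
  {lam | lam 0 = q ∧ ∀ i, ∃ t : (a : Agt) → Fin (M.d a (lam i)),
    (∀ a ∈ A, t a = s a (lam i)) ∧ M.tr (lam i) t = lam (i + 1)}

/-- Standard CGS semantics of ATL. -/
def CGS.sat (M : CGS Agt Q Prp) : ATL Prp Agt → Q → Prop
  | .atom p, q => p ∈ M.label q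
  | .neg φ, q => ¬ M.sat φ q
  | .conj φ ψ, q => M.sat φ q ∧ M.sat ψ q
  | .next A φ, q => ∃ s : (a : Agt) → (q' : Q) → Fin (M.d a q'),
      ∀ lam ∈ M.out A s q, M.sat φ (lam 1)
  | .box A φ, q => ∃ s : (a : Agt) → (q' : Q) → Fin (M.d a q'),
      ∀ lam ∈ M.out A s q, ∀ i, M.sat φ (lam i)
  | .untl A φ ψ, q => ∃ s : (a : Agt) → (q' : Q) → Fin (M.d a q'),
      ∀ lam ∈ M.out A s q, ∃ i, M.sat ψ (lam i) ∧ ∀ j < i, M.sat φ (lam j)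

/-- A concurrent game structure with roles. -/
structure RCGS (Agt Q Prp : Type*) where
  /-- number of roles -/
  k : ℕ
  /-- role membership at each state -/
  role : Q → Agt → Fin k
  /-- number of actions available to a role at a state -/
  act : Q → Fin k → ℕ
  act_pos : ∀ q r, 1 ≤ act q r
  /-- valuation -/
  label : Q → Set Prp
  /-- transition function on complete profiles -/
  tr : (q : Q) → ((r : Fin k) → Fin (act q r) → ℕ) → Q

variable [Fintype Agt]

/-- `P` is a complete profile at `q`. -/
def RCGS.completeAt (S : RCGS Agt Q Prp) (q : Q)
    (P : (r : Fin S.k) → Fin (S.act q r) → ℕ) : Prop :=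
  ∀ r, ∑ j, P r j = (Finset.univ.filter (fun i => S.role q i = r)).card

/-- `F` is an `A`-profile at `q`. -/
def RCGS.coalProfAt (S : RCGS Agt Q Prp) (A : Finset Agt) (q : Q)
    (F : (r : Fin S.k) → Fin (S.act q r) → ℕ) : Prop :=
  ∀ r, ∑ j, F r j = (A.filter (fun i => S.role q i = r)).card

/-- Outcome computations of a coalition strategy in an RCGS: all computations
generated by complete profiles extending the coalition's profile at each state. -/
def RCGS.out (S : RCGS Agt Q Prp)
    (s : (q : Q) → (r : Fin S.k) → Fin (S.act q r) → ℕ) (q : Q) : Set (ℕ → Q) :=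
  {lam | lam 0 = q ∧ ∀ i, ∃ P : (r : Fin S.k) → Fin (S.act (lam i) r) → ℕ,
    S.completeAt (lam i) P ∧ (∀ r j, s (lam i) r j ≤ P r j) ∧
    S.tr (lam i) P = lam (i + 1)}

/-- Role-based semantics of ATL over RCGSs. -/
def RCGS.sat (S : RCGS Agt Q Prp) : ATL Prp Agt → Q → Prop
  | .atom p, q => p ∈ S.label q
  | .neg φ, q => ¬ S.sat φ q
  | .conj φ ψ, q => S.sat φ q ∧ S.sat ψ q
  | .next A φ, q => ∃ s : (q' : Q) → (r : Fin S.k) → Fin (S.act q' r) → ℕ,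
      (∀ q', S.coalProfAt A q' (s q')) ∧ ∀ lam ∈ S.out s q, S.sat φ (lam 1)
  | .box A φ, q => ∃ s : (q' : Q) → (r : Fin S.k) → Fin (S.act q' r) → ℕ,
      (∀ q', S.coalProfAt A q' (s q')) ∧ ∀ lam ∈ S.out s q, ∀ i, S.sat φ (lam i)
  | .untl A φ ψ, q => ∃ s : (q' : Q) → (r : Fin S.k) → Fin (S.act q' r) → ℕ,
      (∀ q', S.coalProfAt A q' (s q')) ∧
      ∀ lam ∈ S.out s q, ∃ i, S.sat ψ (lam i) ∧ ∀ j < i, S.sat φ (lam j)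

/-- The translation `f` from RCGSs to CGSs, aggregating action tuples into
profiles by counting, per role, how many agents chose each action. -/
def RCGS.toCGS [DecidableEq Agt] (S : RCGS Agt Q Prp) : CGS Agt Q Prp where
  d a q := S.act q (S.role q a)
  d_pos a q := S.act_pos q (S.role q a)
  label := S.label
  tr q α := S.tr q (fun r j =>
    (Finset.univ.filter (fun i => S.role q i = r ∧ ((α i : ℕ) = (j : ℕ)))).card)

lemma sum_filter_count {α : Type*} [DecidableEq α] (C : Finset α) (m : ℕ) (f : α → ℕ)
    (h : ∀ i ∈ C, f i < m) :
    ∑ j : Fin m, (C.filter fun i => f i = (j : ℕ)).card = C.card := by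
  rw [Fin.sum_univ_eq_sum_range (fun jn => (C.filter fun i => f i = jn).card)]
  exact (Finset.card_eq_sum_card_fiberwise (fun x hx => Finset.mem_range.2 (h x hx))).symm

lemma exists_assign {α : Type*} [DecidableEq α] (B : Finset α) :
    ∀ (m : ℕ) (n : Fin m → ℕ), (∑ j, n j) = B.card →
    ∃ g : α → ℕ, (∀ i ∈ B, g i < m) ∧
      ∀ j : Fin m, (B.filter fun i => g i = (j : ℕ)).card = n j := by
  induction B using Finset.induction_on with
  | empty =>
    intro m n h
    refine ⟨fun _ => 0, by simp, fun j => ?_⟩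
    simp only [Finset.filter_empty, Finset.card_empty, Finset.card_empty] at h ⊢
    exact (Finset.sum_eq_zero_iff.mp h j (Finset.mem_univ j)).symm
  | @insert i B hiB IH =>
    intro m n h
    rw [Finset.card_insert_of_notMem hiB] at h
    have hne : ∑ j, n j ≠ 0 := by omega
    obtain ⟨j0, -, hj0⟩ := Finset.exists_ne_zero_of_sum_ne_zero hne
    have hsplit : ∑ j, n j = n j0 + ∑ j ∈ Finset.univ.erase j0, n j :=
      (Finset.add_sum_erase _ n (Finset.mem_univ j0)).symm
    set n' := Function.update n j0 (n j0 - 1) with hn'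
    have hsum' : ∑ j, n' j = B.card := by
      rw [Finset.sum_update_of_mem (Finset.mem_univ j0), Finset.sdiff_singleton_eq_erase]
      omega
    obtain ⟨g, hg1, hg2⟩ := IH m n' hsum'
    refine ⟨Function.update g i (j0 : ℕ), ?_, ?_⟩
    · intro i' hi'
      by_cases hii : i' = i
      · rw [hii, Function.update_self]; exact j0.isLt
      · rw [Function.update_of_ne hii]
        exact hg1 i' ((Finset.mem_insert.mp hi').resolve_left hii)
    · intro j
      have hfe : B.filter (fun i' => Function.update g i (j0 : ℕ) i' = (j : ℕ))
          = B.filter (fun i' => g i' = (j : ℕ)) := by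
        apply Finset.filter_congr
        intro x hx
        rw [Function.update_of_ne (by rintro rfl; exact hiB hx)]
      rw [Finset.filter_insert, hfe]
      by_cases hj : j0 = j
      · subst hj
        rw [if_pos (by simp), Finset.card_insert_of_notMem (fun hmem => hiB (Finset.mem_filter.mp hmem).1)]
        rw [hg2 j0, hn', Function.update_self]
        omega
      · rw [if_neg (by simp [Function.update_self]; exact fun hc => hj (Fin.ext hc))]
        rw [hg2 j, hn', Function.update_of_ne (Ne.symm hj)]

lemma out_sub1 [DecidableEq Agt] (S : RCGS Agt Q Prp) (A : Finset Agt)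
    (s : (q : Q) → (r : Fin S.k) → Fin (S.act q r) → ℕ)
    (hs : ∀ q', S.coalProfAt A q' (s q')) :
    ∃ t : (a : Agt) → (q' : Q) → Fin (S.toCGS.d a q'),
      ∀ q lam, lam ∈ S.toCGS.out A t q → lam ∈ S.out s q := by
  have hx : ∀ (q' : Q) (r : Fin S.k), ∃ g : Agt → ℕ,
      (∀ i ∈ A.filter (fun a => S.role q' a = r), g i < S.act q' r) ∧
      ∀ j : Fin (S.act q' r),
        ((A.filter (fun a => S.role q' a = r)).filter fun i => g i = (j : ℕ)).card
          = s q' r j := fun q' r => exists_assign _ _ _ (hs q' r)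
  choose g hg1 hg2 using hx
  refine ⟨fun a q' => if h : a ∈ A then
      ⟨g q' (S.role q' a) a, hg1 q' (S.role q' a) a (by simp [h])⟩
    else ⟨0, S.act_pos q' (S.role q' a)⟩, ?_⟩
  rintro q lam ⟨h0, hstep⟩
  refine ⟨h0, fun i => ?_⟩
  obtain ⟨α, hαA, hαtr⟩ := hstep i
  refine ⟨fun r j => (Finset.univ.filter
      (fun a => S.role (lam i) a = r ∧ ((α a : ℕ) = (j : ℕ)))).card, ?_, ?_, hαtr⟩
  · intro r
    have : ∀ (j : Fin (S.act (lam i) r)),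
        Finset.univ.filter (fun a => S.role (lam i) a = r ∧ ((α a : ℕ) = (j : ℕ)))
          = (Finset.univ.filter (fun a => S.role (lam i) a = r)).filter
              (fun a => (α a : ℕ) = (j : ℕ)) := by
      intro j; rw [Finset.filter_filter]
    simp only [this]
    apply sum_filter_count
    intro a ha
    have hr : S.role (lam i) a = r := (Finset.mem_filter.mp ha).2
    have := (α a).isLt
    simpa [RCGS.toCGS, hr] using this
  · intro r j
    rw [← hg2 (lam i) r j]
    apply Finset.card_le_card
    intro a ha
    simp only [Finset.mem_filter, Finset.mem_univ, true_and] at ha ⊢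
    obtain ⟨⟨haA, har⟩, hgj⟩ := ha
    refine ⟨har, ?_⟩
    have : α a = if h : a ∈ A then
        (⟨g (lam i) (S.role (lam i) a) a, hg1 (lam i) (S.role (lam i) a) a (by simp [h])⟩ :
          Fin (S.toCGS.d a (lam i)))
      else ⟨0, S.act_pos (lam i) (S.role (lam i) a)⟩ := hαA a haA
    rw [this, dif_pos haA]
    simp only [har] at hgj ⊢
    exact hgj

lemma out_sub2 [DecidableEq Agt] (S : RCGS Agt Q Prp) (A : Finset Agt)
    (t : (a : Agt) → (q' : Q) → Fin (S.toCGS.d a q')) :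
    ∃ s : (q' : Q) → (r : Fin S.k) → Fin (S.act q' r) → ℕ,
      (∀ q', S.coalProfAt A q' (s q')) ∧
      ∀ q lam, lam ∈ S.out s q → lam ∈ S.toCGS.out A t q := by
  set s : (q' : Q) → (r : Fin S.k) → Fin (S.act q' r) → ℕ :=
    fun q' r j => (A.filter
      (fun a => S.role q' a = r ∧ ((t a q' : ℕ) = (j : ℕ)))).card with hsdef
  have hs : ∀ q', S.coalProfAt A q' (s q') := by
    intro q' r
    have : ∀ (j : Fin (S.act q' r)),
        A.filter (fun a => S.role q' a = r ∧ ((t a q' : ℕ) = (j : ℕ)))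
          = (A.filter (fun a => S.role q' a = r)).filter
              (fun a => (t a q' : ℕ) = (j : ℕ)) := by
      intro j; rw [Finset.filter_filter]
    simp only [hsdef, this]
    apply sum_filter_count
    intro a ha
    have hr : S.role q' a = r := (Finset.mem_filter.mp ha).2
    have := (t a q').isLt
    simpa [RCGS.toCGS, hr] using this
  refine ⟨s, hs, ?_⟩
  rintro q lam ⟨h0, hstep⟩
  refine ⟨h0, fun i => ?_⟩
  obtain ⟨P, hPc, hPd, hPtr⟩ := hstep i
  -- realize the residual profile on the complement of A
  have hx : ∀ r : Fin S.k, ∃ g : Agt → ℕ,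
      (∀ a ∈ Finset.univ.filter (fun a => S.role (lam i) a = r ∧ a ∉ A), g a < S.act (lam i) r) ∧
      ∀ j : Fin (S.act (lam i) r),
        ((Finset.univ.filter (fun a => S.role (lam i) a = r ∧ a ∉ A)).filter
            fun a => g a = (j : ℕ)).card = P r j - s (lam i) r j := by
    intro r
    apply exists_assign
    have h1 : ∑ j, P r j = (Finset.univ.filter (fun a => S.role (lam i) a = r)).card := hPc r
    have h2 : ∑ j, s (lam i) r j = (A.filter (fun a => S.role (lam i) a = r)).card := hs (lam i) r
    have h3 : ∑ j, (P r j - s (lam i) r j) + ∑ j, s (lam i) r j = ∑ j, P r j := by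
      rw [← Finset.sum_add_distrib]
      exact Finset.sum_congr rfl (fun j _ => Nat.sub_add_cancel (hPd r j))
    have h4 : (A.filter (fun a => S.role (lam i) a = r)).card
        + (Finset.univ.filter (fun a => S.role (lam i) a = r ∧ a ∉ A)).card
        = (Finset.univ.filter (fun a => S.role (lam i) a = r)).card := by
      rw [show A.filter (fun a => S.role (lam i) a = r)
            = Finset.univ.filter (fun a => S.role (lam i) a = r ∧ a ∈ A) by
          ext a; simp [and_comm]]
      rw [show Finset.univ.filter (fun a => S.role (lam i) a = r ∧ a ∈ A)
            = (Finset.univ.filter (fun a => S.role (lam i) a = r)).filter (fun a => a ∈ A) by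
          rw [Finset.filter_filter],
        show Finset.univ.filter (fun a => S.role (lam i) a = r ∧ a ∉ A)
            = (Finset.univ.filter (fun a => S.role (lam i) a = r)).filter (fun a => ¬ a ∈ A) by
          rw [Finset.filter_filter]]
      exact Finset.card_filter_add_card_filter_not _
    omega
  choose g hg1 hg2 using hx
  set α : (a : Agt) → Fin (S.toCGS.d a (lam i)) := fun a =>
    if h : a ∈ A then t a (lam i)
    else ⟨g (S.role (lam i) a) a, hg1 (S.role (lam i) a) a (by simp [h])⟩ with hαdef
  refine ⟨α, fun a ha => by simp [hαdef, ha], ?_⟩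
  show S.tr (lam i) (fun r j => (Finset.univ.filter
      (fun a => S.role (lam i) a = r ∧ ((α a : ℕ) = (j : ℕ)))).card) = lam (i+1)
  rw [← hPtr]
  congr 1
  funext r j
  have hsplit : Finset.univ.filter (fun a => S.role (lam i) a = r ∧ ((α a : ℕ) = (j : ℕ)))
      = (A.filter (fun a => S.role (lam i) a = r ∧ ((t a (lam i) : ℕ) = (j : ℕ)))) ∪
        ((Finset.univ.filter (fun a => S.role (lam i) a = r ∧ a ∉ A)).filter
          (fun a => g r a = (j : ℕ))) := by
    ext a
    simp only [Finset.mem_filter, Finset.mem_univ, true_and, Finset.mem_union]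
    constructor
    · rintro ⟨har, haj⟩
      by_cases ha : a ∈ A
      · left
        refine ⟨ha, har, ?_⟩
        rw [hαdef] at haj
        simpa [ha] using haj
      · right
        refine ⟨⟨har, ha⟩, ?_⟩
        rw [hαdef] at haj
        simp only [ha, dif_neg, not_false_iff] at haj
        rw [har] at haj
        exact haj
    · rintro (⟨ha, har, haj⟩ | ⟨⟨har, ha⟩, haj⟩)
      · refine ⟨har, ?_⟩
        rw [hαdef]
        simpa [ha] using haj
      · refine ⟨har, ?_⟩
        rw [hαdef]
        simp only [ha, dif_neg, not_false_iff]
        rw [har]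
        exact haj
  rw [hsplit, Finset.card_union_of_disjoint, hg2 r j]
  · have : (A.filter (fun a => S.role (lam i) a = r ∧ ((t a (lam i) : ℕ) = (j : ℕ)))).card = s (lam i) r j := rfl
    rw [this]
    exact Nat.add_sub_cancel' (hPd r j)
  · apply Finset.disjoint_left.mpr
    intro a ha hb
    exact (Finset.mem_filter.mp (Finset.mem_filter.mp hb).1).2.2 (Finset.mem_filter.mp ha).1

/-- Equivalence of the role-based semantics on `S` and the standard CGS
semantics on the translation `f(S)`. -/
theorem rcgs_cgs_equiv [DecidableEq Agt] (S : RCGS Agt Q Prp)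
    (φ : ATL Prp Agt) (q : Q) : S.sat φ q ↔ S.toCGS.sat φ q := by
  induction φ generalizing q with
  | atom p => simp [RCGS.sat, CGS.sat, RCGS.toCGS]
  | neg φ ih => simp only [RCGS.sat, CGS.sat, ih]
  | conj φ ψ ih1 ih2 => simp only [RCGS.sat, CGS.sat, ih1, ih2]
  | next A φ ih =>
    simp only [RCGS.sat, CGS.sat]
    constructor
    · rintro ⟨s, hs, h⟩
      obtain ⟨t, ht⟩ := out_sub1 S A s hs
      exact ⟨t, fun lam hlam => (ih (lam 1)).mp (h lam (ht q lam hlam))⟩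
    · rintro ⟨t, h⟩
      obtain ⟨s, hs, hout⟩ := out_sub2 S A t
      exact ⟨s, hs, fun lam hlam => (ih (lam 1)).mpr (h lam (hout q lam hlam))⟩
  | box A φ ih =>
    simp only [RCGS.sat, CGS.sat]
    constructor
    · rintro ⟨s, hs, h⟩
      obtain ⟨t, ht⟩ := out_sub1 S A s hs
      exact ⟨t, fun lam hlam i => (ih (lam i)).mp (h lam (ht q lam hlam) i)⟩
    · rintro ⟨t, h⟩
      obtain ⟨s, hs, hout⟩ := out_sub2 S A t
      exact ⟨s, hs, fun lam hlam i => (ih (lam i)).mpr (h lam (hout q lam hlam) i)⟩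
  | untl A φ ψ ih1 ih2 =>
    simp only [RCGS.sat, CGS.sat]
    constructor
    · rintro ⟨s, hs, h⟩
      obtain ⟨t, ht⟩ := out_sub1 S A s hs
      refine ⟨t, fun lam hlam => ?_⟩
      obtain ⟨i, hψ, hφ⟩ := h lam (ht q lam hlam)
      exact ⟨i, (ih2 (lam i)).mp hψ, fun j hj => (ih1 (lam j)).mp (hφ j hj)⟩
    · rintro ⟨t, h⟩
      obtain ⟨s, hs, hout⟩ := out_sub2 S A t
      refine ⟨s, hs, fun lam hlam => ?_⟩
      obtain ⟨i, hψ, hφ⟩ := h lam (hout q lam hlam)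
      exact ⟨i, (ih2 (lam i)).mpr hψ, fun j hj => (ih1 (lam j)).mpr (hφ j hj)⟩
end

section
/- In any concurrent game structure, the ATL fixed-point equivalence holds: ⟨⟨A⟩⟩□φ is true at q iff φ is true at q and ⟨⟨A⟩⟩◯⟨⟨A⟩⟩□φ is true at q. -/
variable {Agt Q Prp : Type*}

variable [Fintype Agt]

/-- The canonical computation: always follow the coalition's strategy, complete
it to a full action tuple by having everyone follow it. -/
def CGS.follow (M : CGS Agt Q Prp) (s : (a : Agt) → (q : Q) → Fin (M.d a q))
    (q : Q) : ℕ → Q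
  | 0 => q
  | n + 1 => M.tr (M.follow s q n) (fun a => s a (M.follow s q n))

lemma CGS.follow_mem (M : CGS Agt Q Prp) (A : Finset Agt)
    (s : (a : Agt) → (q : Q) → Fin (M.d a q)) (q : Q) :
    M.follow s q ∈ M.out A s q :=
  ⟨rfl, fun i => ⟨fun a => s a (M.follow s q i), fun _ _ => rfl, rfl⟩⟩

/-- Prepend a state to a computation. -/
def CGS.consPath (p : Q) (mu : ℕ → Q) : ℕ → Q
  | 0 => p
  | n + 1 => mu n

lemma CGS.cons_mem (M : CGS Agt Q Prp) (A : Finset Agt)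
    (s : (a : Agt) → (q : Q) → Fin (M.d a q)) {p p' : Q}
    (t : (a : Agt) → Fin (M.d a p)) (ht : ∀ a ∈ A, t a = s a p)
    (htr : M.tr p t = p') {mu : ℕ → Q} (hmu : mu ∈ M.out A s p') :
    CGS.consPath p mu ∈ M.out A s p := by
  refine ⟨rfl, fun i => ?_⟩
  cases i with
  | zero => exact ⟨t, ht, htr.trans hmu.1.symm⟩
  | succ n => exact hmu.2 n

/-- Reachability in one step: if all outcomes satisfy `P` at time 1, so does any
one-step successor obtained by a complete move agreeing with the strategy. -/
lemma CGS.step_reach (M : CGS Agt Q Prp) (A : Finset Agt)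
    (s : (a : Agt) → (q : Q) → Fin (M.d a q)) {p : Q} (P : Q → Prop)
    (hp : ∀ lam ∈ M.out A s p, P (lam 1))
    (t : (a : Agt) → Fin (M.d a p)) (ht : ∀ a ∈ A, t a = s a p) :
    P (M.tr p t) :=
  hp (CGS.consPath p (M.follow s (M.tr p t)))
    (M.cons_mem A s t ht rfl (M.follow_mem A s _))

/-- If `σ` forces `φ` forever from `p`, it also does from any one-step successor
obtained by a complete move agreeing with `σ`. -/
lemma CGS.step_witness (M : CGS Agt Q Prp) (A : Finset Agt)
    (σ : (a : Agt) → (q : Q) → Fin (M.d a q)) {p : Q} {φ : ATL Prp Agt}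
    (hw : ∀ lam ∈ M.out A σ p, ∀ i, M.sat φ (lam i))
    (t : (a : Agt) → Fin (M.d a p)) (ht : ∀ a ∈ A, t a = σ a p) :
    ∀ mu ∈ M.out A σ (M.tr p t), ∀ i, M.sat φ (mu i) :=
  fun mu hmu i => hw (CGS.consPath p mu) (M.cons_mem A σ t ht rfl hmu) (i + 1)

/-- The ATL fixed-point equivalence for `□`:
`⟨⟨A⟩⟩□φ ↔ φ ∧ ⟨⟨A⟩⟩◯⟨⟨A⟩⟩□φ`. -/
theorem box_fixed_point (M : CGS Agt Q Prp) (A : Finset Agt)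
    (φ : ATL Prp Agt) (q : Q) :
    M.sat (.box A φ) q ↔ M.sat φ q ∧ M.sat (.next A (.box A φ)) q := by
  classical
  constructor
  · rintro ⟨s, hs⟩
    refine ⟨hs (M.follow s q) (M.follow_mem A s q) 0, s, fun lam hlam => ?_⟩
    obtain ⟨t, ht, htr⟩ := hlam.2 0
    have hq := hlam.1
    subst hq
    exact ⟨s, fun mu hmu i =>
      hs (CGS.consPath (lam 0) mu) (M.cons_mem A s t ht htr hmu) (i + 1)⟩
  · rintro ⟨hφ, s, hs⟩
    -- the combined strategy: at `q` play `s`, elsewhere play a chosen witness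
    -- of `⟨⟨A⟩⟩□φ` (if one exists)
    set σstar : (a : Agt) → (p : Q) → Fin (M.d a p) := fun a p =>
      if h : M.sat (.box A φ) p then h.choose a p else ⟨0, M.d_pos a p⟩ with hσstar
    set s' : (a : Agt) → (p : Q) → Fin (M.d a p) := fun a p =>
      if p = q then s a p else σstar a p with hs'
    refine ⟨s', fun lam hlam => ?_⟩
    have inv : ∀ i, lam i = q ∨ M.sat (.box A φ) (lam i) := by
      intro i
      induction i with
      | zero => exact Or.inl hlam.1
      | succ n ih =>
        obtain ⟨t, ht, htr⟩ := hlam.2 n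
        by_cases hq : lam n = q
        · -- play according to `s`: the successor satisfies the box formula
          have ht' : ∀ a ∈ A, t a = s a (lam n) := by
            intro a ha; rw [ht a ha, hs']; simp [hq]
          have hs2 : ∀ mu ∈ M.out A s (lam n), M.sat (.box A φ) (mu 1) := by
            rw [hq]; exact hs
          have := M.step_reach A s (M.sat (.box A φ)) hs2 t ht'
          rw [htr] at this
          exact Or.inr this
        · rcases ih with h | hbox
          · exact absurd h hq
          · have ht' : ∀ a ∈ A, t a = hbox.choose a (lam n) := by
              intro a ha
              rw [ht a ha, hs']
              simp only [hq, if_false, hσstar]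
              rw [dif_pos hbox]
            have := M.step_witness A hbox.choose hbox.choose_spec t ht'
            rw [htr] at this
            exact Or.inr ⟨hbox.choose, this⟩
    intro i
    rcases inv i with h | hbox
    · rw [h]; exact hφ
    · obtain ⟨σ, hσ⟩ := hbox
      exact hσ (M.follow σ (lam i)) (M.follow_mem A σ (lam i)) 0
end

section
/- In any concurrent game structure, the ATL until fixed-point equivalence holds: ⟨⟨A⟩⟩φ₁𝒰φ₂ is true at q iff φ₂ is true at q, or (φ₁ is true at q and ⟨⟨A⟩⟩◯⟨⟨A⟩⟩φ₁𝒰φ₂ is true at q). -/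
variable {Agt Q Prp : Type*}

variable [Fintype Agt]

namespace UntilFPAux

attribute [local instance] Classical.propDecidable

variable {Agt Q Prp : Type*} [Fintype Agt]

/-- Coalition `A` can force the next state into `X` from `q`. -/
def forces (M : CGS Agt Q Prp) (A : Finset Agt) (X : Set Q) (q : Q) : Prop :=
  ∃ c : ∀ a, Fin (M.d a q), ∀ t : ∀ a, Fin (M.d a q),
    (∀ a ∈ A, t a = c a) → M.tr q t ∈ X

/-- Finite approximants of the until fixed point. -/
def Xn (M : CGS Agt Q Prp) (A : Finset Agt) (φ₁ φ₂ : ATL Prp Agt) : ℕ → Set Q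
  | 0 => ∅
  | n + 1 => {q | M.sat φ₂ q ∨ (M.sat φ₁ q ∧ forces M A (Xn M A φ₁ φ₂ n) q)}

lemma forces_mono (M : CGS Agt Q Prp) (A : Finset Agt) {X Y : Set Q} (h : X ⊆ Y) {q : Q}
    (hf : forces M A X q) : forces M A Y q := by
  obtain ⟨c, hc⟩ := hf
  exact ⟨c, fun t ht => h (hc t ht)⟩

lemma Xn_mono (M : CGS Agt Q Prp) (A : Finset Agt) (φ₁ φ₂ : ATL Prp Agt) :
    ∀ {m n : ℕ}, m ≤ n → Xn M A φ₁ φ₂ m ⊆ Xn M A φ₁ φ₂ n := by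
  have step : ∀ m, Xn M A φ₁ φ₂ m ⊆ Xn M A φ₁ φ₂ (m + 1) := by
    intro m
    induction m with
    | zero => exact fun q hq => absurd hq (Set.notMem_empty q)
    | succ m ih =>
      rintro q (h2 | ⟨h1, hf⟩)
      · exact Or.inl h2
      · exact Or.inr ⟨h1, forces_mono M A ih hf⟩
  intro m n hmn
  induction hmn with
  | refl => exact fun _ h => h
  | step _ ih => exact fun q hq => step _ (ih hq)

/-- The canonical strategy: at each state where some approximant can be forced,
play a profile forcing the least such approximant. -/
noncomputable def sStar (M : CGS Agt Q Prp) (A : Finset Agt) (φ₁ φ₂ : ATL Prp Agt) :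
    ∀ (a : Agt) (q : Q), Fin (M.d a q) := fun a q =>
  if h : ∃ n, forces M A (Xn M A φ₁ φ₂ n) q then
    (Nat.find_spec h).choose a
  else ⟨0, M.d_pos a q⟩

lemma sStar_spec (M : CGS Agt Q Prp) (A : Finset Agt) (φ₁ φ₂ : ATL Prp Agt) {q : Q}
    {n : ℕ} (hn : forces M A (Xn M A φ₁ φ₂ n) q)
    (t : ∀ a, Fin (M.d a q)) (ht : ∀ a ∈ A, t a = sStar M A φ₁ φ₂ a q) :
    M.tr q t ∈ Xn M A φ₁ φ₂ n := by
  have h : ∃ m, forces M A (Xn M A φ₁ φ₂ m) q := ⟨n, hn⟩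
  simp only [sStar, dif_pos h] at ht
  have := (Nat.find_spec h).choose_spec t ht
  exact Xn_mono M A φ₁ φ₂ (Nat.find_le hn) this

/-- The canonical strategy witnesses until from every state of every approximant. -/
lemma Xn_sat_untl (M : CGS Agt Q Prp) (A : Finset Agt) (φ₁ φ₂ : ATL Prp Agt) :
    ∀ n, ∀ q ∈ Xn M A φ₁ φ₂ n, ∀ lam ∈ M.out A (sStar M A φ₁ φ₂) q,
      ∃ i, M.sat φ₂ (lam i) ∧ ∀ j < i, M.sat φ₁ (lam j) := by
  intro n
  induction n with
  | zero => exact fun q hq => absurd hq (Set.notMem_empty q)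
  | succ n ih =>
    rintro q hq lam ⟨h0, hstep⟩
    subst h0
    rcases hq with h2 | ⟨h1, hf⟩
    · exact ⟨0, h2, by omega⟩
    · obtain ⟨t, ht, htr⟩ := hstep 0
      have hmem : lam 1 ∈ Xn M A φ₁ φ₂ n := htr ▸ sStar_spec M A φ₁ φ₂ hf t ht
      have hshift : (fun i => lam (i + 1)) ∈ M.out A (sStar M A φ₁ φ₂) (lam 1) :=
        ⟨rfl, fun i => hstep (i + 1)⟩
      obtain ⟨i, hi2, hi1⟩ := ih (lam 1) hmem _ hshift
      refine ⟨i + 1, hi2, fun j hj => ?_⟩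
      cases j with
      | zero => exact h1
      | succ j => exact hi1 j (by omega)

/-- If until holds at `q`, then `q` lies in some approximant. -/
lemma sat_untl_mem (M : CGS Agt Q Prp) (A : Finset Agt) (φ₁ φ₂ : ATL Prp Agt) (q : Q)
    (h : M.sat (.untl A φ₁ φ₂) q) : ∃ n, q ∈ Xn M A φ₁ φ₂ n := by
  obtain ⟨s, hs⟩ := h
  by_contra hq
  push_neg at hq
  -- From a "bad" state (in no approximant) where φ₁ holds, the adversary can stay bad.
  haveI := Classical.decEq Agt
  have key : ∀ q', (∀ n, q' ∉ Xn M A φ₁ φ₂ n) → M.sat φ₁ q' →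
      ∃ t : ∀ a, Fin (M.d a q'), (∀ a ∈ A, t a = s a q') ∧
        ∀ n, M.tr q' t ∉ Xn M A φ₁ φ₂ n := by
    intro q' hbad h1
    by_contra hc
    push_neg at hc
    have H : ∀ t : ∀ a, Fin (M.d a q'), ∃ n,
        (∀ a ∈ A, t a = s a q') → M.tr q' t ∈ Xn M A φ₁ φ₂ n := by
      intro t
      by_cases ht : ∀ a ∈ A, t a = s a q'
      · obtain ⟨n, hn⟩ := hc t ht
        exact ⟨n, fun _ => hn⟩
      · exact ⟨0, fun h' => absurd h' ht⟩
    set N : ℕ := Finset.univ.sup (fun t : ∀ a, Fin (M.d a q') => (H t).choose) with hN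
    have hforce : forces M A (Xn M A φ₁ φ₂ N) q' := by
      refine ⟨fun a => s a q', fun t ht => ?_⟩
      have := (H t).choose_spec ht
      exact Xn_mono M A φ₁ φ₂ (Finset.le_sup (Finset.mem_univ t)) this
    exact hbad (N + 1) (Or.inr ⟨h1, hforce⟩)
  -- Build a computation staying bad while φ₁ holds.
  have hstepAll : ∀ q', ∃ t : ∀ a, Fin (M.d a q'), (∀ a ∈ A, t a = s a q') ∧
      ((∀ n, q' ∉ Xn M A φ₁ φ₂ n) → M.sat φ₁ q' →
        ∀ n, M.tr q' t ∉ Xn M A φ₁ φ₂ n) := by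
    intro q'
    by_cases h' : (∀ n, q' ∉ Xn M A φ₁ φ₂ n) ∧ M.sat φ₁ q'
    · obtain ⟨t, ht, hbad⟩ := key q' h'.1 h'.2
      exact ⟨t, ht, fun _ _ => hbad⟩
    · exact ⟨fun a => s a q', fun a _ => rfl, fun hb h1 => absurd ⟨hb, h1⟩ h'⟩
  set step : Q → Q := fun q' => M.tr q' (hstepAll q').choose with hstepdef
  set lam : ℕ → Q := fun i => step^[i] q with hlam
  have hsucc : ∀ i, lam (i + 1) = step (lam i) := by
    intro i; simp only [hlam, Function.iterate_succ_apply']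
  have hmem : lam ∈ M.out A s q := by
    refine ⟨rfl, fun i => ?_⟩
    refine ⟨(hstepAll (lam i)).choose, (hstepAll (lam i)).choose_spec.1, ?_⟩
    rw [hsucc i]
  obtain ⟨i, hi2, hi1⟩ := hs lam hmem
  have hbadall : ∀ j, j ≤ i → ∀ n, lam j ∉ Xn M A φ₁ φ₂ n := by
    intro j
    induction j with
    | zero => exact fun _ => hq
    | succ j ihj =>
      intro hji n
      have hb := ihj (by omega)
      have h1 := hi1 j (by omega)
      rw [hsucc j]
      exact (hstepAll (lam j)).choose_spec.2 hb h1 n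
  exact hbadall i le_rfl 1 (Or.inl hi2)

end UntilFPAux


/-- The ATL fixed-point equivalence for `𝒰`:
`⟨⟨A⟩⟩φ₁𝒰φ₂ ↔ φ₂ ∨ (φ₁ ∧ ⟨⟨A⟩⟩◯⟨⟨A⟩⟩φ₁𝒰φ₂)`. -/
theorem until_fixed_point (M : CGS Agt Q Prp) (A : Finset Agt)
    (φ₁ φ₂ : ATL Prp Agt) (q : Q) :
    M.sat (.untl A φ₁ φ₂) q ↔
      M.sat φ₂ q ∨ (M.sat φ₁ q ∧ M.sat (.next A (.untl A φ₁ φ₂)) q) := by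
  classical
  constructor
  · intro h
    obtain ⟨n, hn⟩ := UntilFPAux.sat_untl_mem M A φ₁ φ₂ q h
    cases n with
    | zero => exact absurd hn (Set.notMem_empty q)
    | succ n =>
      rcases hn with h2 | ⟨h1, hf⟩
      · exact Or.inl h2
      · refine Or.inr ⟨h1, ?_⟩
        show ∃ s : (a : Agt) → (q' : Q) → Fin (M.d a q'),
          ∀ lam ∈ M.out A s q, M.sat (.untl A φ₁ φ₂) (lam 1)
        refine ⟨UntilFPAux.sStar M A φ₁ φ₂, ?_⟩
        rintro lam ⟨h0, hstep⟩
        obtain ⟨t, ht, htr⟩ := hstep 0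
        subst h0
        have hmem : lam 1 ∈ UntilFPAux.Xn M A φ₁ φ₂ n :=
          htr ▸ UntilFPAux.sStar_spec M A φ₁ φ₂ hf t ht
        exact ⟨UntilFPAux.sStar M A φ₁ φ₂, fun μ hμ =>
          UntilFPAux.Xn_sat_untl M A φ₁ φ₂ n (lam 1) hmem μ hμ⟩
  · rintro (h2 | ⟨h1, hnext⟩)
    · exact ⟨fun a q' => ⟨0, M.d_pos a q'⟩, fun lam hlam =>
        ⟨0, by rw [hlam.1]; exact h2, by omega⟩⟩
    · obtain ⟨s', hs'⟩ : ∃ s : (a : Agt) → (q' : Q) → Fin (M.d a q'),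
          ∀ lam ∈ M.out A s q, M.sat (.untl A φ₁ φ₂) (lam 1) := hnext
      have H : ∀ t : ∀ a, Fin (M.d a q), ∃ n,
          (∀ a ∈ A, t a = s' a q) → M.tr q t ∈ UntilFPAux.Xn M A φ₁ φ₂ n := by
        intro t
        by_cases ht : ∀ a ∈ A, t a = s' a q
        · set g : Q → Q := fun q'' => M.tr q'' (fun a => s' a q'') with hg
          set lam : ℕ → Q := fun i => match i with
            | 0 => q
            | i + 1 => g^[i] (M.tr q t) with hlamdef
          have hmem : lam ∈ M.out A s' q := by
            refine ⟨rfl, fun i => ?_⟩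
            cases i with
            | zero => exact ⟨t, ht, rfl⟩
            | succ i =>
              refine ⟨fun a => s' a (lam (i + 1)), fun a _ => rfl, ?_⟩
              show g (lam (i + 1)) = lam (i + 2)
              show g (g^[i] (M.tr q t)) = g^[i + 1] (M.tr q t)
              rw [Function.iterate_succ_apply']
          have hu := hs' lam hmem
          obtain ⟨n, hn⟩ := UntilFPAux.sat_untl_mem M A φ₁ φ₂ (lam 1) hu
          exact ⟨n, fun _ => hn⟩
        · exact ⟨0, fun h' => absurd h' ht⟩
      haveI := Classical.decEq Agt
      set N : ℕ := Finset.univ.sup (fun t : ∀ a, Fin (M.d a q) => (H t).choose) with hN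
      have hforce : UntilFPAux.forces M A (UntilFPAux.Xn M A φ₁ φ₂ N) q := by
        refine ⟨fun a => s' a q, fun t ht => ?_⟩
        exact UntilFPAux.Xn_mono M A φ₁ φ₂ (Finset.le_sup (Finset.mem_univ t))
          ((H t).choose_spec ht)
      have hqmem : q ∈ UntilFPAux.Xn M A φ₁ φ₂ (N + 1) := Or.inr ⟨h1, hforce⟩
      exact ⟨UntilFPAux.sStar M A φ₁ φ₂, UntilFPAux.Xn_sat_untl M A φ₁ φ₂ (N + 1) q hqmem⟩
end

section
/- Two distinct A-profiles at a state q can share a common complete extension: there exist role/action parameters and profiles F ≠ F' for a coalition A together with a complete profile P with F ≤ P and F' ≤ P. In contrast, in a CGS, two distinct action tuples for A at q never share a complete extension. -/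
/-- Two distinct coalition profiles can share a common complete extension
(in an RCGS), whereas in a CGS two distinct coalition action tuples never
share a common complete extension. -/
theorem shared_extensions_profiles_not_tuples :
    (∃ (a nA nRest : ℕ) (F F' P : Fin a → ℕ),
      (∑ j, F j = nA) ∧ (∑ j, F' j = nA) ∧ F ≠ F' ∧
      (∑ j, P j = nA + nRest) ∧ (∀ j, F j ≤ P j) ∧ (∀ j, F' j ≤ P j)) ∧
    (∀ (Agt : Type) (A : Set Agt) (s s' : Agt → ℕ),
      (∃ i ∈ A, s i ≠ s' i) →
      ¬ ∃ t : Agt → ℕ, (∀ i ∈ A, t i = s i) ∧ (∀ i ∈ A, t i = s' i)) := by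
  constructor
  · refine ⟨2, 1, 1, ![1,0], ![0,1], ![1,1], ?_, ?_, ?_, ?_, ?_, ?_⟩ <;>
      first
      | decide
      | (intro h; have := congrFun h 0; simp at this)
  · rintro Agt A s s' ⟨i, hi, hne⟩ ⟨t, h1, h2⟩
    exact hne ((h1 i hi).symm.trans (h2 i hi))
end
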